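/- Suppose the timed word w of total weight T is ε-far from the thick component C, the weak cuts dominate (total weak-cut cost c_w ≥ εT/2), and k = 24mB/ε = 2^{i_l}. Then the number β of blocks of weight greater than k in the cut decomposition satisfies β ≤ εT/(24mB), the number γ of blocks of weight at most k satisfies γ ≥ εT/(8mB), and hence γ ≥ 3β. -/

import Mathlib

open scoped Classical

/-! ### Timed automata -/

/-- A clock valuation assigns a nonnegative real time value to each clock. -/
abbrev ClockVal (X : Type) := X → ℝ

/-- Comparison operators allowed in atomic clock constraints. -/
inductive Cmp where
  | lt | le | ge | gt
deriving DecidableEq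

/-- An atomic (diagonal-free) clock constraint `x ⋈ c` with `c ∈ ℕ`. -/
structure Atomic (X : Type) where
  clock : X
  cmp : Cmp
  bound : ℕ

/-- Satisfaction of an atomic constraint by a clock valuation. -/
def Atomic.sat {X : Type} (c : Atomic X) (v : ClockVal X) : Prop :=
  match c.cmp with
  | .lt => v c.clock < (c.bound : ℝ)
  | .le => v c.clock ≤ (c.bound : ℝ)
  | .ge => (c.bound : ℝ) ≤ v c.clock
  | .gt => (c.bound : ℝ) < v c.clock

/-- A guard is a conjunction (list) of atomic clock constraints. -/
abbrev Guard (X : Type) := List (Atomic X)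

def Guard.sat {X : Type} (g : Guard X) (v : ClockVal X) : Prop := ∀ c ∈ g, c.sat v

/-- Resetting the clocks in `Y` to `0`. -/
noncomputable def resetVal {X : Type} (Y : Set X) (v : ClockVal X) : ClockVal X :=
  fun x => if x ∈ Y then 0 else v x

/-- Elapsing of time `t` on a valuation. -/
def shift {X : Type} (v : ClockVal X) (t : ℝ) : ClockVal X := fun x => v x + t

/-- A timed automaton `A = (Σ, Q, X, E, I, F)`:  a set of transitions, each transition
carrying a guard, a letter and a set of clocks to reset, initial and final locations. -/
structure TimedAutomaton (A Q X : Type) where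
  E : Set (Q × (Guard X × A × Set X) × Q)
  I : Set Q
  F : Set Q

/-- A timed word: a sequence of letters with (positive) relative time delays. -/
abbrev TWord (A : Type) := List (A × ℝ)

/-- The weight (total duration) of a timed word: the sum of its relative delays. -/
def twt {A : Type} (w : TWord A) : ℝ := (w.map Prod.snd).sum

/-- The delay of the letter at position `j` (0 if out of range). -/
def delayAt {A : Type} (w : TWord A) (j : ℕ) : ℝ := (w.map Prod.snd).getD j 0

/-- A local run of the timed automaton over a timed word, from an arbitrary state
(location together with a clock valuation) to another state. -/
inductive LRun {A Q X : Type} (TA : TimedAutomaton A Q X) :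
    Q × ClockVal X → TWord A → Q × ClockVal X → Prop
  | nil (s : Q × ClockVal X) : LRun TA s [] s
  | cons {q : Q} {v : ClockVal X} {g : Guard X} {a : A} {τ : ℝ} {Y : Set X} {q' : Q}
      {u : TWord A} {s' : Q × ClockVal X} :
      (q, (g, a, Y), q') ∈ TA.E → 0 < τ → g.sat (shift v τ) →
      LRun TA (q', resetVal Y (shift v τ)) u s' →
      LRun TA (q, v) ((a, τ) :: u) s'

/-- The valuation assigning `0` to every clock. -/
def zeroVal {X : Type} : ClockVal X := fun _ => 0

/-- The language of finite timed words accepted by a timed automaton: words labelling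
a run from an initial location with all clocks at `0` to a final location. -/
def Lf {A Q X : Type} (TA : TimedAutomaton A Q X) : Set (TWord A) :=
  {w | ∃ q₀ ∈ TA.I, ∃ qf ∈ TA.F, ∃ v', LRun TA (q₀, zeroVal) w (qf, v')}

/-- `B` bounds all the constants appearing in the clock constraints of `TA`. -/
def MaxConst {A Q X : Type} (TA : TimedAutomaton A Q X) (B : ℕ) : Prop :=
  ∀ e ∈ TA.E, ∀ c ∈ e.2.1.1, c.bound ≤ B

/-! ### Regions and the region automaton -/

/-- A set of regions for the constraints of `TA`: a finite partition of the clock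
valuations, compatible with the guards, with elapsing of time and with resets. -/
structure RegionSet (A Q X : Type) (TA : TimedAutomaton A Q X) where
  regions : Set (Set (ClockVal X))
  finite : regions.Finite
  partition : ∀ v : ClockVal X, ∃! R, R ∈ regions ∧ v ∈ R
  compatGuards : ∀ e ∈ TA.E, ∀ R ∈ regions,
      R ⊆ {v | Guard.sat e.2.1.1 v} ∨ R ∩ {v | Guard.sat e.2.1.1 v} = ∅
  compatTime : ∀ R ∈ regions, ∀ R' ∈ regions,
      (∃ v ∈ R, ∃ t : ℝ, 0 ≤ t ∧ shift v t ∈ R') →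
      ∀ v' ∈ R, ∃ t' : ℝ, 0 ≤ t' ∧ shift v' t' ∈ R'
  compatReset : ∀ R ∈ regions, ∀ R' ∈ regions, ∀ Y : Set X,
      ((resetVal Y) '' R ∩ R').Nonempty → (resetVal Y) '' R ⊆ R'

/-- A state of the region automaton: a location paired with a region. -/
abbrev RState (Q X : Type) := Q × Set (ClockVal X)

/-- The states of the region automaton. -/
def RAStates {A Q X : Type} (TA : TimedAutomaton A Q X) (RS : RegionSet A Q X TA) :
    Set (RState Q X) := {s | s.2 ∈ RS.regions}

/-- The transition relation of the region automaton: `(q,R) →a (q',R')` whenever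
`q →(g,a,Y) q'` in `TA` and there is a region `R''` satisfying `g` with `R' = [Y←0]R''`. -/
def RegionTrans {A Q X : Type} (TA : TimedAutomaton A Q X) (RS : RegionSet A Q X TA) :
    RState Q X → A → RState Q X → Prop :=
  fun s a s' =>
    s.2 ∈ RS.regions ∧ s'.2 ∈ RS.regions ∧
    ∃ g Y, (s.1, (g, a, Y), s'.1) ∈ TA.E ∧
      ∃ R'' ∈ RS.regions, R'' ⊆ {v | Guard.sat g v} ∧ s'.2 = (resetVal Y) '' R''

/-- An (untimed) edge of the region automaton. -/
def RStep {A Q X : Type} (TA : TimedAutomaton A Q X) (RS : RegionSet A Q X TA)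
    (s s' : RState Q X) : Prop := ∃ a, RegionTrans TA RS s a s'

/-- A strongly connected component of the region automaton (a nonempty set of states of
the region automaton which are pairwise reachable inside the component). -/
def IsSCC {A Q X : Type} (TA : TimedAutomaton A Q X) (RS : RegionSet A Q X TA)
    (C : Set (RState Q X)) : Prop :=
  C.Nonempty ∧ (∀ s ∈ C, s ∈ RAStates TA RS) ∧
    ∀ s ∈ C, ∀ s' ∈ C,
      Relation.ReflTransGen (fun x y => RStep TA RS x y ∧ x ∈ C ∧ y ∈ C) s s'

/-- A transient state of the region automaton: a state lying on no cycle. -/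
def Transient {A Q X : Type} (TA : TimedAutomaton A Q X) (RS : RegionSet A Q X TA)
    (s : RState Q X) : Prop := ¬ Relation.TransGen (RStep TA RS) s s

/-- A cycle inside the set `C` of states of the region automaton. -/
def CycleIn {A Q X : Type} (TA : TimedAutomaton A Q X) (RS : RegionSet A Q X TA)
    (C : Set (RState Q X)) (π : List (RState Q X)) : Prop :=
  (∀ s ∈ π, s ∈ C) ∧ List.Chain' (RStep TA RS) π ∧
    ∃ h : π ≠ [], RStep TA RS (π.getLast h) (π.head h)

/-- A forgetful cycle: for every state `(q,R)` on the cycle and all valuations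
`v, v' ∈ R` there is a timed word with a local run from `(q,v)` to `(q,v')`. -/
def Forgetful {A Q X : Type} (TA : TimedAutomaton A Q X) (π : List (RState Q X)) : Prop :=
  ∀ s ∈ π, ∀ v ∈ s.2, ∀ v' ∈ s.2, ∃ u : TWord A, LRun TA (s.1, v) u (s.1, v')

/-- A component is thick if it admits a forgetful cycle. -/
def Thick {A Q X : Type} (TA : TimedAutomaton A Q X) (RS : RegionSet A Q X TA)
    (C : Set (RState Q X)) : Prop :=
  ∃ π, CycleIn TA RS C π ∧ Forgetful TA π

/-! ### Runs inside a component, compatibility -/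

/-- The state `(q,v)` projects into the component `C`. -/
def inComp {A Q X : Type} (C : Set (RState Q X)) (s : Q × ClockVal X) : Prop :=
  ∃ R, (s.1, R) ∈ C ∧ s.2 ∈ R

/-- A local run all of whose (projected) states stay in the component `C`. -/
inductive LRunIn {A Q X : Type} (TA : TimedAutomaton A Q X) (C : Set (RState Q X)) :
    Q × ClockVal X → TWord A → Q × ClockVal X → Prop
  | nil (s : Q × ClockVal X) : inComp C s → LRunIn TA C s [] s
  | cons {q : Q} {v : ClockVal X} {g : Guard X} {a : A} {τ : ℝ} {Y : Set X} {q' : Q}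
      {u : TWord A} {s' : Q × ClockVal X} :
      inComp C (q, v) →
      (q, (g, a, Y), q') ∈ TA.E → 0 < τ → g.sat (shift v τ) →
      LRunIn TA C (q', resetVal Y (shift v τ)) u s' →
      LRunIn TA C (q, v) ((a, τ) :: u) s'

/-- A timed word is `C`-compatible: it has a local run whose projection stays in `C`. -/
def CComp {A Q X : Type} (TA : TimedAutomaton A Q X) (C : Set (RState Q X))
    (u : TWord A) : Prop :=
  ∃ s s', LRunIn TA C s u s'

/-! ### Traced runs and paths of components -/

/-- A local run together with the trace of region states it visits. -/
inductive TRun {A Q X : Type} (TA : TimedAutomaton A Q X) (RS : RegionSet A Q X TA) :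
    Q × ClockVal X → TWord A → List (RState Q X) → Q × ClockVal X → Prop
  | nil (q : Q) (v : ClockVal X) (R : Set (ClockVal X)) :
      R ∈ RS.regions → v ∈ R → TRun TA RS (q, v) [] [(q, R)] (q, v)
  | cons {q : Q} {v : ClockVal X} {R : Set (ClockVal X)} {g : Guard X} {a : A} {τ : ℝ}
      {Y : Set X} {q' : Q} {u : TWord A} {tr : List (RState Q X)} {s' : Q × ClockVal X} :
      R ∈ RS.regions → v ∈ R →
      (q, (g, a, Y), q') ∈ TA.E → 0 < τ → Guard.sat g (shift v τ) →
      TRun TA RS (q', resetVal Y (shift v τ)) u tr s' →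
      TRun TA RS (q, v) ((a, τ) :: u) ((q, R) :: tr) s'

/-- A node of a path `Π` in the graph of components of the region automaton: either a
(transient) state or a (strongly connected) component. -/
inductive PathNode (S : Type) where
  | state : S → PathNode S
  | comp : Set S → PathNode S

/-- Membership of a region-automaton state in a node of the path. -/
def memNode {S : Type} (s : S) : PathNode S → Prop
  | .state s' => s = s'
  | .comp C => s ∈ C

/-- A valid path `Π`: every node is a transient state or a strongly connected component
of the region automaton. -/
def ValidPath {A Q X : Type} (TA : TimedAutomaton A Q X) (RS : RegionSet A Q X TA)
    (pth : List (PathNode (RState Q X))) : Prop :=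
  ∀ n ∈ pth, (∃ s, n = .state s ∧ s ∈ RAStates TA RS ∧ Transient TA RS s) ∨
    (∃ C, n = .comp C ∧ IsSCC TA RS C)

/-- The trace `tr` follows the path `pth` between the node indices `lo` and `hi`:
there is a monotone assignment of the visited region states to nodes of the path. -/
def FollowsIn {S : Type} (tr : List S) (pth : List (PathNode S)) (lo hi : ℕ) : Prop :=
  ∃ f : ℕ → ℕ, Monotone f ∧
    ∀ i (h : i < tr.length), lo ≤ f i ∧ f i ≤ hi ∧
      ∃ h' : f i < pth.length, memNode (tr.get ⟨i, h⟩) (pth.get ⟨f i, h'⟩)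

/-- A timed word is compatible for the path `pth` between node indices `lo` and `hi`. -/
def CompatFor {A Q X : Type} (TA : TimedAutomaton A Q X) (RS : RegionSet A Q X TA)
    (u : TWord A) (pth : List (PathNode (RState Q X))) (lo hi : ℕ) : Prop :=
  ∃ s tr s', TRun TA RS s u tr s' ∧ FollowsIn tr pth lo hi

/-- The language of timed words admitting a run through the path `pth`. -/
def LangPath {A Q X : Type} (TA : TimedAutomaton A Q X) (RS : RegionSet A Q X TA)
    (pth : List (PathNode (RState Q X))) : Set (TWord A) :=
  {u | CompatFor TA RS u pth 0 pth.length}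

/-- The factor of `w` of length `ln` starting at position `p`. -/
def factorAt {A : Type} (w : TWord A) (p ln : ℕ) : TWord A := (w.drop p).take ln

/-- The union of two (overlapping) factors, given as (position, length) pairs. -/
def unionFactor (f g : ℕ × ℕ) : ℕ × ℕ := (f.1, max (f.1 + f.2) (g.1 + g.2) - f.1)

/-- The ordered factors of `w` described by `fs` (position/length pairs) are
`Π`-compatible: each factor is compatible for `pth` between some node indices, these
windows follow the order of the path, and the union of any two consecutive
overlapping factors is also compatible for `pth`. -/
def PiCompatSeq {A Q X : Type} (TA : TimedAutomaton A Q X) (RS : RegionSet A Q X TA)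
    (w : TWord A) {l : ℕ} (fs : Fin l → ℕ × ℕ)
    (pth : List (PathNode (RState Q X))) : Prop :=
  ∃ iv : Fin l → ℕ × ℕ,
    (∀ i, CompatFor TA RS (factorAt w (fs i).1 (fs i).2) pth (iv i).1 (iv i).2) ∧
    (∀ i j : Fin l, i ≤ j → (iv i).1 ≤ (iv j).1 ∧ (iv i).2 ≤ (iv j).2) ∧
    (∀ (i : Fin l) (h : i.val + 1 < l),
      (fs ⟨i.val + 1, h⟩).1 < (fs i).1 + (fs i).2 →
      CompatFor TA RS
        (factorAt w (unionFactor (fs i) (fs ⟨i.val + 1, h⟩)).1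
          (unionFactor (fs i) (fs ⟨i.val + 1, h⟩)).2)
        pth (iv i).1 (iv ⟨i.val + 1, h⟩).2)

/-! ### The timed edit distance -/

/-- One timed edit operation, with its cost: deletion of `(a,τ)` at cost `τ`,
insertion of `(a,τ)` at cost `τ`, modification of `(a,τ)` into `(a,τ')`
at cost `|τ - τ'|`. -/
inductive EditStep (A : Type) : TWord A → TWord A → ℝ → Prop
  | del (u v : TWord A) (a : A) (τ : ℝ) : EditStep A (u ++ (a, τ) :: v) (u ++ v) τ
  | ins (u v : TWord A) (a : A) (τ : ℝ) : EditStep A (u ++ v) (u ++ (a, τ) :: v) τ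
  | mod (u v : TWord A) (a : A) (τ τ' : ℝ) :
      EditStep A (u ++ (a, τ) :: v) (u ++ (a, τ') :: v) |τ - τ'|

/-- A sequence of timed edit operations, with its total cost. -/
inductive EditSeq (A : Type) : TWord A → TWord A → ℝ → Prop
  | refl (w : TWord A) : EditSeq A w w 0
  | step {w w' w'' : TWord A} {c d : ℝ} :
      EditStep A w w' c → EditSeq A w' w'' d → EditSeq A w w'' (c + d)

/-- The absolute timed edit distance between two timed words. -/
noncomputable def editDist {A : Type} (w w' : TWord A) : ℝ := sInf {c | EditSeq A w w' c}

/-- The relative timed edit distance between two timed words. -/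
noncomputable def relDist {A : Type} (w w' : TWord A) : ℝ :=
  editDist w w' / max (twt w) (twt w')

/-- The relative timed edit distance between a timed word and a timed language. -/
noncomputable def distToLang {A : Type} (w : TWord A) (L : Set (TWord A)) : ℝ :=
  sInf {d | ∃ w' ∈ L, relDist w w' = d}

/-! ### The cut decomposition -/

/-- The length of the longest `C`-compatible prefix of `u`. -/
noncomputable def lcp {A Q X : Type} (TA : TimedAutomaton A Q X) (C : Set (RState Q X))
    (u : TWord A) : ℕ :=
  Nat.findGreatest (fun n => CComp TA C (u.take n)) u.length

/-- The blocks of the cut decomposition of `u` for the component `C`: each block is the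
longest `C`-compatible factor starting from the position of the previous cut. -/
noncomputable def cutBlocks {A Q X : Type} (TA : TimedAutomaton A Q X)
    (C : Set (RState Q X)) (u : TWord A) : List (TWord A) :=
  if h : u.length ≤ lcp TA C u then [u]
  else u.take (lcp TA C u) :: cutBlocks TA C (u.drop (lcp TA C u + 1))
termination_by u.length
decreasing_by
  simp only [List.length_drop]
  omega

/-- The cut letters of the cut decomposition of `u` for the component `C`. -/
noncomputable def cutLetters {A Q X : Type} (TA : TimedAutomaton A Q X)
    (C : Set (RState Q X)) (u : TWord A) : TWord A :=
  if h : u.length ≤ lcp TA C u then []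
  else u.get ⟨lcp TA C u, by omega⟩ :: cutLetters TA C (u.drop (lcp TA C u + 1))
termination_by u.length
decreasing_by
  simp only [List.length_drop]
  omega

/-- The cut at letter `(a,τ)` is weak if the single letter is compatible with `C`
from some state of `C`; otherwise the cut is strong. -/
def WeakCut {A Q X : Type} (TA : TimedAutomaton A Q X) (C : Set (RState Q X))
    (p : A × ℝ) : Prop := CComp TA C [p]

/-- The correction cost of a cut: at most `3mB` for a weak cut (insertion of a link via
a forgetful cycle), and the delay `τ` of the cut letter for a strong cut (deletion). -/
noncomputable def cutCost {A Q X : Type} (TA : TimedAutomaton A Q X)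
    (C : Set (RState Q X)) (mR BR : ℝ) (p : A × ℝ) : ℝ :=
  if WeakCut TA C p then 3 * mR * BR else p.2

/-- The total weight of the cuts of the cut decomposition of `u` for `C`. -/
noncomputable def totalCutCost {A Q X : Type} (TA : TimedAutomaton A Q X)
    (C : Set (RState Q X)) (mR BR : ℝ) (u : TWord A) : ℝ :=
  ((cutLetters TA C u).map (cutCost TA C mR BR)).sum

/-- The total weight of the weak cuts of the cut decomposition of `u` for `C`. -/
noncomputable def weakCutCost {A Q X : Type} (TA : TimedAutomaton A Q X)
    (C : Set (RState Q X)) (mR BR : ℝ) (u : TWord A) : ℝ :=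
  (((cutLetters TA C u).filter (fun p => decide (WeakCut TA C p))).map
    (cutCost TA C mR BR)).sum

/-! ### Samples and the weighted time distribution -/

/-- The length of the minimal factor of `w` starting at position `j` of weight at
least `k` (up to the end of the word). -/
noncomputable def sampleLen {A : Type} (w : TWord A) (j : ℕ) (k : ℝ) : ℕ :=
  if h : ∃ n, k ≤ twt ((w.drop j).take n) then Nat.find h else w.length - j

/-- The `k`-sample of `w` at position `j`: the minimal factor of weight at least `k`
starting at position `j`. -/
noncomputable def sampleAt {A : Type} (w : TWord A) (j : ℕ) (k : ℝ) : TWord A :=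
  factorAt w j (sampleLen w j k)

/-- The probability, under the weighted time distribution `μ` (position `j` is selected
with probability `τ_j / T`), of the event `E` on positions of `w`. -/
noncomputable def muProb {A : Type} (w : TWord A) (E : ℕ → Prop) : ℝ :=
  (∑ j ∈ Finset.range w.length, if E j then delayAt w j else 0) / twt w

/-- The ordered `k`-samples of `w` determined by the chosen positions `js`. -/
noncomputable def sortedSamples {A : Type} (w : TWord A) {l : ℕ}
    (js : Fin l → Fin w.length) (k : ℝ) : Fin l → ℕ × ℕ := fun i =>
  let p := (List.insertionSort (· ≤ ·) (List.ofFn fun i => (js i).val)).getD i 0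
  (p, sampleLen w p k)

/-! ### Extended components and the tester -/

/-- An extended component: a thick strongly connected component of the region automaton
together with a prefix of transient states and a distinguished exit state. -/
structure ExtComp (A Q X : Type) (TA : TimedAutomaton A Q X) (RS : RegionSet A Q X TA) where
  pre : List (RState Q X)
  comp : Set (RState Q X)
  exit : RState Q X
  pre_mem : ∀ s ∈ pre, s ∈ RAStates TA RS
  pre_transient : ∀ s ∈ pre, Transient TA RS s
  scc : IsSCC TA RS comp
  thick : Thick TA RS comp
  exit_mem : exit ∈ comp

/-- The path nodes of an extended component. -/
def ExtComp.nodes {A Q X : Type} {TA : TimedAutomaton A Q X} {RS : RegionSet A Q X TA}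
    (Ec : ExtComp A Q X TA RS) : List (PathNode (RState Q X)) :=
  Ec.pre.map PathNode.state ++ [PathNode.comp Ec.comp]

/-- The path `Π̄ = C̄_1 ... C̄_l` of a sequence of extended components. -/
def pathOf {A Q X : Type} {TA : TimedAutomaton A Q X} {RS : RegionSet A Q X TA} {l : ℕ}
    (Cs : Fin l → ExtComp A Q X TA RS) : List (PathNode (RState Q X)) :=
  (List.ofFn fun i => (Cs i).nodes).flatten

/-- The probability that the Word Tester along the path `pth`, drawing `l` independent
samples of weight at least `k` according to the weighted time distribution, rejects:
it rejects exactly when the ordered samples are not `Π`-compatible. -/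
noncomputable def rejectProb {A Q X : Type} (TA : TimedAutomaton A Q X)
    (RS : RegionSet A Q X TA) (w : TWord A) (l : ℕ) (k : ℝ)
    (pth : List (PathNode (RState Q X))) : ℝ :=
  ∑ js : Fin l → Fin w.length,
    (∏ i, (w.get (js i)).2 / twt w) *
      (if PiCompatSeq TA RS w (sortedSamples w js k) pth then 0 else 1)

/-- A decomposition of `w` into `l` consecutive intervals, the `i`-th of which carries
cuts for the component `Cs i` of accumulated correction cost between `εT/(2l)` and
`3εT/(2l)`. -/
def GoodDecomp {A Q X : Type} (TA : TimedAutomaton A Q X) {l : ℕ}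
    (Cs : Fin l → Set (RState Q X)) (w : TWord A) (ε T mR BR : ℝ) : Prop :=
  ∃ b : Fin (l + 1) → ℕ, b 0 = 0 ∧ b (Fin.last l) = w.length ∧ Monotone b ∧
    ∀ i : Fin l,
      ε * T / (2 * l) ≤ totalCutCost TA (Cs i) mR BR
          (factorAt w (b i.castSucc) (b i.succ - b i.castSucc)) ∧
      totalCutCost TA (Cs i) mR BR
          (factorAt w (b i.castSucc) (b i.succ - b i.castSucc)) ≤ 3 * ε * T / (2 * l)

/-! Blocks heavier than `k` have total weight at most `T`, so `β ≤ T / k = εT/(24mB)`.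
Every weak cut costs exactly `3mB`, so `c_w ≥ εT/2` forces at least `εT/(6mB)` cuts, and a
decomposition with `h` cuts has `h + 1` blocks. Hence
`γ = h + 1 - β ≥ εT/(6mB) - εT/(24mB) = εT/(8mB) ≥ 3β`. -/

lemma twt_append {A : Type} (u v : TWord A) : twt (u ++ v) = twt u + twt v := by
  simp [twt]

lemma twt_cons {A : Type} (p : A × ℝ) (u : TWord A) : twt (p :: u) = p.2 + twt u := by
  simp [twt]

lemma twt_nonneg {A : Type} {u : TWord A} (hu : ∀ p ∈ u, 0 ≤ p.2) : 0 ≤ twt u :=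
  List.sum_nonneg (by simpa using fun τ a h => hu (a, τ) h)

lemma length_filter_lt_mul_le_sum {α : Type} (l : List α) (f : α → ℝ)
    (hf : ∀ a ∈ l, 0 ≤ f a) (k : ℝ) :
    ((l.filter fun a => decide (k < f a)).length : ℝ) * k ≤ (l.map f).sum := by
  induction l with
  | nil => simp
  | cons a t ih =>
    have ht := ih fun b hb => hf b (List.mem_cons_of_mem a hb)
    have ha := hf a List.mem_cons_self
    by_cases hka : k < f a <;> simp [hka] <;> linarith

lemma length_filter_lt_add_length_filter_le {α : Type} (l : List α) (f : α → ℝ) (k : ℝ) :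
    (l.filter fun a => decide (k < f a)).length + (l.filter fun a => decide (f a ≤ k)).length
      = l.length := by
  simp only [← not_lt, decide_not]
  exact (List.length_eq_length_filter_add _).symm

section CutDecomposition

variable {A Q X : Type} (TA : TimedAutomaton A Q X) (C : Set (RState Q X))

lemma eq_take_lcp_append_cons {u : TWord A} (h : lcp TA C u < u.length) :
    u = u.take (lcp TA C u) ++ u[lcp TA C u] :: u.drop (lcp TA C u + 1) := by
  rw [← List.drop_eq_getElem_cons h, List.take_append_drop]

lemma twt_eq_sum_twt_cutBlocks_add (u : TWord A) :
    twt u = ((cutBlocks TA C u).map twt).sum + ((cutLetters TA C u).map Prod.snd).sum := by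
  induction u using cutBlocks.induct TA C with
  | case1 u h =>
    rw [cutBlocks, cutLetters]
    simp [h]
  | case2 u h ih =>
    rw [cutBlocks, cutLetters]
    conv_lhs => rw [eq_take_lcp_append_cons TA C (not_le.mp h)]
    simp only [dif_neg h, List.map_cons, List.sum_cons, twt_append, twt_cons, ih,
      List.get_eq_getElem]
    ring

lemma length_cutBlocks (u : TWord A) :
    (cutBlocks TA C u).length = (cutLetters TA C u).length + 1 := by
  induction u using cutBlocks.induct TA C with
  | case1 u h =>
    rw [cutBlocks, cutLetters]
    simp [h]
  | case2 u h ih =>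
    rw [cutBlocks, cutLetters]
    simp [h, ih]

lemma mem_of_mem_cutLetters {u : TWord A} {p : A × ℝ} (hp : p ∈ cutLetters TA C u) :
    p ∈ u := by
  induction u using cutBlocks.induct TA C with
  | case1 u h =>
    rw [cutLetters] at hp
    simp [h] at hp
  | case2 u h ih =>
    rw [cutLetters] at hp
    rcases List.mem_cons.mp (by simpa [h] using hp) with rfl | hp
    · exact List.getElem_mem _
    · exact List.mem_of_mem_drop (ih hp)

lemma mem_of_mem_cutBlocks {u b : TWord A} (hb : b ∈ cutBlocks TA C u) {p : A × ℝ}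
    (hp : p ∈ b) : p ∈ u := by
  induction u using cutBlocks.induct TA C with
  | case1 u h =>
    rw [cutBlocks] at hb
    simp only [h, dif_pos, List.mem_singleton] at hb
    exact hb ▸ hp
  | case2 u h ih =>
    rw [cutBlocks] at hb
    rcases List.mem_cons.mp (by simpa [h] using hb) with rfl | hb
    · exact List.mem_of_mem_take hp
    · exact List.mem_of_mem_drop (ih hb)

lemma sum_twt_cutBlocks_le {u : TWord A} (hu : ∀ p ∈ u, 0 ≤ p.2) :
    ((cutBlocks TA C u).map twt).sum ≤ twt u := by
  have hcuts : 0 ≤ ((cutLetters TA C u).map Prod.snd).sum :=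
    List.sum_nonneg (by simpa using fun τ a h => hu (a, τ) (mem_of_mem_cutLetters TA C h))
  linarith [twt_eq_sum_twt_cutBlocks_add TA C u]

lemma weakCutCost_eq (mR BR : ℝ) (u : TWord A) :
    weakCutCost TA C mR BR u =
      ((cutLetters TA C u).filter fun p => decide (WeakCut TA C p)).length * (3 * mR * BR) := by
  have hcost : ∀ p ∈ (cutLetters TA C u).filter fun p => decide (WeakCut TA C p),
      cutCost TA C mR BR p = 3 * mR * BR :=
    fun p hp => if_pos (of_decide_eq_true (List.mem_filter.mp hp).2)
  rw [weakCutCost, List.map_congr_left hcost, List.map_const', List.sum_replicate, nsmul_eq_mul]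

lemma weakCutCost_le_length_mul {mR BR : ℝ} (h : 0 ≤ mR * BR) (u : TWord A) :
    weakCutCost TA C mR BR u ≤ (cutLetters TA C u).length * (3 * mR * BR) := by
  rw [weakCutCost_eq]
  gcongr
  · linarith
  · exact List.length_filter_le _ _

end CutDecomposition

theorem beta_gamma_bounds_general
    {A Q X : Type} (TA : TimedAutomaton A Q X)
    (C : Set (RState Q X))
    (m B : ℕ)
    (w : TWord A) (hpos : ∀ p ∈ w, 0 < p.2) (T ε k : ℝ) (il : ℕ)
    (hT : T = twt w) (hε : 0 < ε)
    (hweak : ε * T / 2 ≤ weakCutCost TA C m B w)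
    (hk : k = 24 * m * B / ε) (hkil : k = 2 ^ il) :
    (((cutBlocks TA C w).filter fun b => decide (k < twt b)).length : ℝ)
        ≤ ε * T / (24 * m * B) ∧
    ε * T / (8 * m * B)
        ≤ (((cutBlocks TA C w).filter fun b => decide (twt b ≤ k)).length : ℝ) ∧
    3 * (((cutBlocks TA C w).filter fun b => decide (k < twt b)).length : ℝ)
        ≤ (((cutBlocks TA C w).filter fun b => decide (twt b ≤ k)).length : ℝ) := by
  have hw : ∀ p ∈ w, 0 ≤ p.2 := fun p hp => (hpos p hp).le
  -- `mB > 0` is read off from `k = 2 ^ il > 0`.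
  have hk0 : 0 < k := hkil ▸ by positivity
  have hmB : 0 < (m : ℝ) * B := by
    have := (div_pos_iff_of_pos_right hε).mp (hk ▸ hk0)
    linarith
  set β := ((cutBlocks TA C w).filter fun b => decide (k < twt b)).length
  set γ := ((cutBlocks TA C w).filter fun b => decide (twt b ≤ k)).length
  have hβk : β * k ≤ T := hT ▸
    (length_filter_lt_mul_le_sum _ twt (fun b hb => twt_nonneg fun p hp =>
      hw p (mem_of_mem_cutBlocks TA C hb hp)) k).trans (sum_twt_cutBlocks_le TA C hw)
  have hcuts : ε * T / 2 ≤ (cutLetters TA C w).length * (3 * m * B) :=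
    hweak.trans (weakCutCost_le_length_mul TA C hmB.le w)
  have hβγ : (β : ℝ) + γ = (cutLetters TA C w).length + 1 := by
    exact_mod_cast (length_filter_lt_add_length_filter_le _ twt k).trans (length_cutBlocks TA C w)
  have hβ : β * (24 * m * B) ≤ ε * T := by
    rw [hk, ← mul_div_assoc, div_le_iff₀ hε] at hβk
    linarith
  have hγ : ε * T ≤ γ * (8 * m * B) := by nlinarith
  refine ⟨(le_div_iff₀ (by linarith)).mpr hβ, (div_le_iff₀ (by linarith)).mpr hγ, ?_⟩
  nlinarith

/-- Suppose the timed word `w` of total weight `T` is `ε`-far from the thick component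
`C`, the weak cuts dominate (total weak-cut cost `c_w ≥ εT/2`), and
`k = 24mB/ε = 2^{i_l}`.  Then the number `β` of blocks of weight greater than `k` in
the cut decomposition satisfies `β ≤ εT/(24mB)`, the number `γ` of blocks of weight at
most `k` satisfies `γ ≥ εT/(8mB)`, and hence `γ ≥ 3β`. -/
theorem beta_gamma_bounds
    {A Q X : Type} (TA : TimedAutomaton A Q X) (RS : RegionSet A Q X TA)
    (C : Set (RState Q X)) (hC : IsSCC TA RS C) (hthick : Thick TA RS C)
    (m B : ℕ) (hfin : (RAStates TA RS).Finite) (hm : (RAStates TA RS).ncard = m)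
    (hB : MaxConst TA B)
    (w : TWord A) (hpos : ∀ p ∈ w, 0 < p.2) (T ε k : ℝ) (il : ℕ)
    (hT : T = twt w) (hε : 0 < ε)
    (hfar : ε < distToLang w {u | CComp TA C u})
    (hweak : ε * T / 2 ≤ weakCutCost TA C m B w)
    (hk : k = 24 * m * B / ε) (hkil : k = 2 ^ il) :
    (((cutBlocks TA C w).filter fun b => decide (k < twt b)).length : ℝ)
        ≤ ε * T / (24 * m * B) ∧
    ε * T / (8 * m * B)
        ≤ (((cutBlocks TA C w).filter fun b => decide (twt b ≤ k)).length : ℝ) ∧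
    3 * (((cutBlocks TA C w).filter fun b => decide (k < twt b)).length : ℝ)
        ≤ (((cutBlocks TA C w).filter fun b => decide (twt b ≤ k)).length : ℝ) :=
  beta_gamma_bounds_general TA C m B w hpos T ε k il hT hε hweak hk hkil
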